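/- Let K ≥ 2, let θ : {1,…,K} → ℝ have a unique best arm I* (θ_{I*} > θ_j for all j ≠ I*), and let σ : {1,…,K} → ℝ be strictly positive. For strictly positive p in the probability simplex S_K and j ≠ I*, define C_j(p) = (θ_{I*} − θ_j)² / (2(σ_{I*}²/p_{I*} + σ_j²/p_j)), and define the selection functions h^j by h^j_{I*}(p) = (σ_{I*}²/p_{I*})/(σ_{I*}²/p_{I*} + σ_j²/p_j), h^j_j(p) = (σ_j²/p_j)/(σ_{I*}²/p_{I*} + σ_j²/p_j), and h^j_k(p) = 0 for k ∉ {I*, j}. Then a component-wise strictly positive p ∈ S_K maximizes p' ↦ min_{j ≠ I*} C_j(p') over S_K if and only if there exist nonnegative dual variables (μ_j)_{j ≠ I*} with Σ_{j ≠ I*} μ_j = 1 such that (stationarity) p_i = Σ_{j ≠ I*} μ_j h^j_i(p) for every i ∈ {1,…,K}, and (complementary slackness) μ_j · (min_{j' ≠ I*} C_{j'}(p) − C_j(p)) = 0 for every j ≠ I*. -/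

import Mathlib

/-!
Each `C_j` is concave and positively homogeneous of degree one on the nonnegative orthant, so its
gradient `g_j` at `p` is a supergradient there with `g_j ⬝ᵥ p = C_j p` (Euler), and
`h^j_i(p) C_j(p) = p_i g_{j,i}`. Under complementary slackness, stationarity is therefore the
condition `∑ μ_j g_j = Γ(p) • 1`. This gives sufficiency at once:
`Γ q ≤ ∑ μ_j C_j q ≤ ∑ μ_j (g_j ⬝ᵥ q) = Γ p` on the simplex. Necessity is Gordan's alternative:
if no such `μ` exists, a separating functional produces a direction `d` with `∑ d_i = 0` along
which every active `C_j` strictly increases, and a small step from `p` along `d` increases `Γ`.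
-/

open Filter Topology Finset

theorem exists_mem_stdSimplex_sum_smul_eq_zero_or_exists_pos {ι E : Type*} [Fintype ι]
    [AddCommGroup E] [Module ℝ E] [TopologicalSpace E] [IsTopologicalAddGroup E]
    [ContinuousSMul ℝ E] [LocallyConvexSpace ℝ E] [T2Space E] (v : ι → E) :
    (∃ w ∈ stdSimplex ℝ ι, ∑ i, w i • v i = 0) ∨ ∃ f : StrongDual ℝ E, ∀ i, 0 < f (v i) := by
  classical
  set Φ := Fintype.linearCombination ℝ v
  by_cases h0 : (0 : E) ∈ Φ '' stdSimplex ℝ ι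
  · obtain ⟨w, hw, hw0⟩ := h0
    exact Or.inl ⟨w, hw, by rwa [← Fintype.linearCombination_apply]⟩
  · obtain ⟨f, u, hfu, hf⟩ := geometric_hahn_banach_point_closed
      ((convex_stdSimplex ℝ ι).linear_image Φ)
      ((isCompact_stdSimplex ℝ ι).image Φ.continuous_of_finiteDimensional).isClosed h0
    refine Or.inr ⟨f, fun i => ?_⟩
    have := hf (v i) ⟨Pi.single i 1, single_mem_stdSimplex ℝ i, by simp [Φ]⟩
    rw [map_zero] at hfu
    linarith

theorem HasDerivAt.eventually_nhdsGT_lt {φ : ℝ → ℝ} {D m : ℝ} (hφ : HasDerivAt φ D 0)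
    (hm : m ≤ φ 0) (hD : φ 0 = m → 0 < D) : ∀ᶠ t in 𝓝[>] 0, m < φ t := by
  rcases hm.lt_or_eq with hlt | heq
  · exact nhdsWithin_le_nhds (hφ.continuousAt.eventually (lt_mem_nhds hlt))
  · filter_upwards [hφ.tendsto_slope_zero_right.eventually (lt_mem_nhds (hD heq.symm)),
      self_mem_nhdsWithin] with t hslope ht
    rw [zero_add, smul_eq_mul] at hslope
    linarith [pos_of_mul_pos_right hslope (inv_nonneg.2 (le_of_lt ht)), heq]

section MaxMin

variable {α ι : Type*} [Fintype ι] {F : ι → (α → ℝ) → ℝ} {g : ι → α → ℝ} {p : α → ℝ}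

theorem sum_smul_eq_const_iff_forall_eq_sum_mul {h : ι → α → ℝ} {w : ι → ℝ} {m : ℝ}
    (hhg : ∀ j i, h j i * F j p = p i * g j i) (hslack : ∀ j, w j * (m - F j p) = 0)
    (hm : m ≠ 0) (hp : ∀ i, p i ≠ 0) :
    (∑ j, w j • g j = fun _ => m) ↔ ∀ i, p i = ∑ j, w j * h j i := by
  have key : ∀ i, (∑ j, w j * h j i) * m = p i * (∑ j, w j • g j) i := fun i => by
    simp only [Finset.sum_apply, Pi.smul_apply, smul_eq_mul, sum_mul, mul_sum]
    exact sum_congr rfl fun j _ => by linear_combination h j i * hslack j + w j * hhg j i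
  refine funext_iff.trans (forall_congr' fun i => ?_)
  calc (∑ j, w j • g j) i = m ↔ p i * (∑ j, w j • g j) i = p i * m :=
        (mul_right_inj' (hp i)).symm
    _ ↔ (∑ j, w j * h j i) * m = p i * m := by rw [key]
    _ ↔ p i = ∑ j, w j * h j i := by rw [mul_left_inj' hm, eq_comm]

variable [Fintype α]

theorem IsMaxOn.exists_eq_iInf_dotProduct_nonpos [Nonempty ι]
    (hmax : IsMaxOn (fun q => ⨅ j, F j q) (stdSimplex ℝ α) p) (hp : ∀ i, 0 < p i)
    (hsum : ∑ i, p i = 1) (hF : ∀ j d, HasDerivAt (fun t : ℝ => F j (p + t • d)) (g j ⬝ᵥ d) 0)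
    {d : α → ℝ} (hd : ∑ i, d i = 0) : ∃ j, F j p = ⨅ k, F k p ∧ g j ⬝ᵥ d ≤ 0 := by
  by_contra! hascent
  have hF_gt : ∀ᶠ t in 𝓝[>] (0 : ℝ), ∀ j, ⨅ k, F k p < F j (p + t • d) :=
    eventually_all.2 fun j => (hF j d).eventually_nhdsGT_lt
      (by simpa using ciInf_le (Finite.bddBelow_range fun k => F k p) j)
      (fun h => hascent j (by simpa using h))
  have hpos : ∀ᶠ t in 𝓝[>] (0 : ℝ), ∀ i, 0 < p i + t * d i :=
    eventually_all.2 fun i => nhdsWithin_le_nhds <|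
      (by fun_prop : Continuous fun t : ℝ => p i + t * d i).continuousAt.eventually
        (lt_mem_nhds (by simpa using hp i))
  obtain ⟨t, hgt, hpos⟩ := (hF_gt.and hpos).exists
  obtain ⟨j, hj⟩ := exists_eq_ciInf_of_finite (f := fun j => F j (p + t • d))
  have hle : ⨅ k, F k (p + t • d) ≤ ⨅ k, F k p :=
    hmax ⟨fun i => (hpos i).le, by simp [sum_add_distrib, ← mul_sum, hd, hsum]⟩
  exact (hgt j).not_ge (hj ▸ hle)

theorem exists_weights_of_forall_exists_dotProduct_nonpos (hsum : ∑ i, p i = 1) {s : ι → ℝ}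
    (hs : ∀ j, s j ≤ 0) (h : ∀ d : α → ℝ, ∑ i, d i = 0 → ∃ j, s j = 0 ∧ g j ⬝ᵥ d ≤ 0) :
    ∃ w ∈ stdSimplex ℝ ι, (∀ j, w j * s j = 0) ∧ ∃ c, ∑ j, w j • g j = fun _ => c := by
  classical
  -- The last coordinate carries the slack, so a vanishing convex combination lives where `s = 0`.
  rcases exists_mem_stdSimplex_sum_smul_eq_zero_or_exists_pos
    (fun j => (g j - (g j ⬝ᵥ p) • 1, s j)) with ⟨w, hw, hw0⟩ | ⟨f, hf⟩
  · have hv : ∑ j, w j • (g j - (g j ⬝ᵥ p) • 1) = 0 := by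
      simpa [Prod.fst_sum] using congrArg Prod.fst hw0
    have hslack : ∑ j, w j * s j = 0 := by simpa [Prod.snd_sum] using congrArg Prod.snd hw0
    refine ⟨w, hw, fun j => (sum_eq_zero_iff_of_nonpos fun j _ =>
      mul_nonpos_of_nonneg_of_nonpos (hw.1 j) (hs j)).1 hslack j (mem_univ j),
      ∑ j, w j * (g j ⬝ᵥ p), funext fun i => ?_⟩
    simpa [mul_sub, sum_sub_distrib, sub_eq_zero] using congrFun hv i
  · set c : α → ℝ := fun i => f (fun k => if i = k then 1 else 0, 0)
    have hfc : ∀ x : α → ℝ, f (x, 0) = x ⬝ᵥ c := fun x => by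
      have := LinearMap.pi_apply_eq_sum_univ
        ((f : (α → ℝ) × ℝ →L[ℝ] ℝ).toLinearMap ∘ₗ LinearMap.inl ℝ (α → ℝ) ℝ) x
      simpa [dotProduct, c] using this
    -- For `s j = 0`: `g j ⬝ᵥ (c - (∑ c) • p) = f (g j - (g j ⬝ᵥ p) • 1, 0) > 0`.
    obtain ⟨j, hsj, hgd⟩ := h (c - (∑ i, c i) • p) (by simp [sum_sub_distrib, ← mul_sum, hsum])
    have := hf j
    rw [hsj, hfc] at this
    simp only [sub_dotProduct, dotProduct_sub, smul_dotProduct, dotProduct_smul, one_dotProduct,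
      smul_eq_mul] at this hgd
    linarith [dotProduct_comm (g j) c]

theorem isMaxOn_iInf_of_sum_smul_eq_const
    (hsup : ∀ j, ∀ q ∈ stdSimplex ℝ α, F j q ≤ g j ⬝ᵥ q) {w : ι → ℝ} (hw : w ∈ stdSimplex ℝ ι)
    (hwg : ∑ j, w j • g j = fun _ => ⨅ k, F k p) :
    IsMaxOn (fun q => ⨅ j, F j q) (stdSimplex ℝ α) p := fun q hq =>
  calc ⨅ j, F j q = ∑ j, w j * ⨅ k, F k q := by rw [← sum_mul, hw.2, one_mul]
    _ ≤ ∑ j, w j * (g j ⬝ᵥ q) := sum_le_sum fun j _ => mul_le_mul_of_nonneg_left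
        ((ciInf_le (Finite.bddBelow_range _) j).trans (hsup j q hq)) (hw.1 j)
    _ = (∑ j, w j • g j) ⬝ᵥ q := by simp [sum_dotProduct]
    _ = ⨅ k, F k p := by rw [hwg]; simp [dotProduct, ← mul_sum, hq.2]

theorem isMaxOn_iInf_iff_exists_sum_smul_eq_const [Nonempty ι] (hp : ∀ i, 0 < p i)
    (hsum : ∑ i, p i = 1) (hF : ∀ j d, HasDerivAt (fun t : ℝ => F j (p + t • d)) (g j ⬝ᵥ d) 0)
    (hsup : ∀ j, ∀ q ∈ stdSimplex ℝ α, F j q ≤ g j ⬝ᵥ q) (heuler : ∀ j, g j ⬝ᵥ p = F j p) :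
    IsMaxOn (fun q => ⨅ j, F j q) (stdSimplex ℝ α) p ↔
      ∃ w ∈ stdSimplex ℝ ι, (∀ j, w j * ((⨅ k, F k p) - F j p) = 0) ∧
        ∑ j, w j • g j = fun _ => ⨅ k, F k p := by
  refine ⟨fun hmax => ?_, fun ⟨w, hw, _, hwg⟩ => isMaxOn_iInf_of_sum_smul_eq_const hsup hw hwg⟩
  obtain ⟨w, hw, hslack, c, hc⟩ := exists_weights_of_forall_exists_dotProduct_nonpos hsum
    (fun j => sub_nonpos.2 (ciInf_le (Finite.bddBelow_range fun k => F k p) j)) fun d hd => by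
      obtain ⟨j, hj, hgd⟩ := hmax.exists_eq_iInf_dotProduct_nonpos hp hsum hF hd
      exact ⟨j, sub_eq_zero.2 hj.symm, hgd⟩
  refine ⟨w, hw, hslack, hc.trans (funext fun _ => ?_)⟩
  -- Euler's identity and complementary slackness pin the multiplier down.
  calc c = (fun _ => c) ⬝ᵥ p := by simp [dotProduct, ← mul_sum, hsum]
    _ = ∑ j, w j * F j p := by simp [← hc, sum_dotProduct, heuler]
    _ = ∑ j, w j * ⨅ k, F k p := sum_congr rfl fun j _ => by linear_combination -hslack j
    _ = ⨅ k, F k p := by rw [← sum_mul, hw.2, one_mul]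

end MaxMin

-- Division by zero gives the convention `pairChernoff Δ a b 0 0 = 0`.
noncomputable def pairChernoff (Δ a b x y : ℝ) : ℝ := Δ * x * y / (2 * (a * y + b * x))

noncomputable def pairChernoffDerivFst (Δ a b x y : ℝ) : ℝ :=
  Δ * a * y ^ 2 / (2 * (a * y + b * x) ^ 2)

noncomputable def pairChernoffDerivSnd (Δ a b x y : ℝ) : ℝ :=
  Δ * b * x ^ 2 / (2 * (a * y + b * x) ^ 2)

section pairChernoff

variable {Δ a b x y : ℝ}

theorem pairChernoffDerivFst_mul_add_pairChernoffDerivSnd_mul (hxy : a * y + b * x ≠ 0) :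
    pairChernoffDerivFst Δ a b x y * x + pairChernoffDerivSnd Δ a b x y * y =
      pairChernoff Δ a b x y := by
  unfold pairChernoff pairChernoffDerivFst pairChernoffDerivSnd
  field_simp

theorem pairChernoff_le (hΔ : 0 ≤ Δ) (ha : 0 < a) (hb : 0 < b) (hx : 0 < x) (hy : 0 < y)
    {x' y' : ℝ} (hx' : 0 ≤ x') (hy' : 0 ≤ y') :
    pairChernoff Δ a b x' y' ≤
      pairChernoffDerivFst Δ a b x y * x' + pairChernoffDerivSnd Δ a b x y * y' := by
  unfold pairChernoff pairChernoffDerivFst pairChernoffDerivSnd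
  have hD : 0 < 2 * (a * y + b * x) ^ 2 := by positivity
  rcases (by positivity : (0:ℝ) ≤ a * y' + b * x').eq_or_lt with hE | hE
  · rw [← hE, mul_zero, div_zero]
    positivity
  · rw [div_mul_eq_mul_div, div_mul_eq_mul_div, ← add_div, div_le_div_iff₀ (by positivity) hD]
    nlinarith [mul_nonneg (mul_nonneg hΔ (mul_pos ha hb).le) (sq_nonneg (y * x' - x * y'))]

theorem hasDerivAt_pairChernoff_add_mul (hxy : a * y + b * x ≠ 0) (u v : ℝ) :
    HasDerivAt (fun t => pairChernoff Δ a b (x + t * u) (y + t * v))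
      (pairChernoffDerivFst Δ a b x y * u + pairChernoffDerivSnd Δ a b x y * v) 0 := by
  have hx : HasDerivAt (fun t : ℝ => x + t * u) u 0 := by
    simpa using ((hasDerivAt_id (0:ℝ)).mul_const u).const_add x
  have hy : HasDerivAt (fun t : ℝ => y + t * v) v 0 := by
    simpa using ((hasDerivAt_id (0:ℝ)).mul_const v).const_add y
  refine (((hx.const_mul Δ).mul hy).div (((hy.const_mul a).add (hx.const_mul b)).const_mul 2)
    (by simpa using hxy)).congr_deriv ?_
  simp only [Pi.add_apply, Pi.mul_apply, zero_mul, add_zero]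
  unfold pairChernoffDerivFst pairChernoffDerivSnd
  field_simp
  ring

theorem pairChernoff_selection_fst (ha : 0 < a) (hb : 0 < b) (hx : 0 < x) (hy : 0 < y) :
    a / x / (a / x + b / y) * pairChernoff Δ a b x y = x * pairChernoffDerivFst Δ a b x y := by
  unfold pairChernoff pairChernoffDerivFst
  field_simp

theorem pairChernoff_selection_snd (ha : 0 < a) (hb : 0 < b) (hx : 0 < x) (hy : 0 < y) :
    b / y / (a / x + b / y) * pairChernoff Δ a b x y = y * pairChernoffDerivSnd Δ a b x y := by
  unfold pairChernoff pairChernoffDerivSnd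
  field_simp

end pairChernoff

section Gaussian

variable {K : ℕ} (θ σ : Fin K → ℝ) (I : Fin K) (p : Fin K → ℝ)

noncomputable def chernoffInfo (j : Fin K) (q : Fin K → ℝ) : ℝ :=
  pairChernoff ((θ I - θ j) ^ 2) (σ I ^ 2) (σ j ^ 2) (q I) (q j)

noncomputable def chernoffGrad (j : Fin K) : Fin K → ℝ :=
  Pi.single I (pairChernoffDerivFst ((θ I - θ j) ^ 2) (σ I ^ 2) (σ j ^ 2) (p I) (p j)) +
    Pi.single j (pairChernoffDerivSnd ((θ I - θ j) ^ 2) (σ I ^ 2) (σ j ^ 2) (p I) (p j))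

noncomputable def chernoffSelection (j i : Fin K) : ℝ :=
  if i = I then (σ I ^ 2 / p I) / (σ I ^ 2 / p I + σ j ^ 2 / p j)
  else if i = j then (σ j ^ 2 / p j) / (σ I ^ 2 / p I + σ j ^ 2 / p j)
  else 0

variable {θ σ I p}

theorem chernoffGrad_dotProduct (j : Fin K) (q : Fin K → ℝ) :
    chernoffGrad θ σ I p j ⬝ᵥ q =
      pairChernoffDerivFst ((θ I - θ j) ^ 2) (σ I ^ 2) (σ j ^ 2) (p I) (p j) * q I +
        pairChernoffDerivSnd ((θ I - θ j) ^ 2) (σ I ^ 2) (σ j ^ 2) (p I) (p j) * q j := by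
  simp [chernoffGrad, add_dotProduct]

theorem chernoffInfo_denom_pos (hσ : ∀ i, 0 < σ i) (hp : ∀ i, 0 < p i) (j : Fin K) :
    0 < σ I ^ 2 * p j + σ j ^ 2 * p I := by
  have := hσ I; have := hσ j; have := hp I; have := hp j
  positivity

theorem chernoffGrad_dotProduct_self (hσ : ∀ i, 0 < σ i) (hp : ∀ i, 0 < p i) (j : Fin K) :
    chernoffGrad θ σ I p j ⬝ᵥ p = chernoffInfo θ σ I j p := by
  rw [chernoffGrad_dotProduct, chernoffInfo,
    pairChernoffDerivFst_mul_add_pairChernoffDerivSnd_mul (chernoffInfo_denom_pos hσ hp j).ne']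

theorem hasDerivAt_chernoffInfo_add_smul (hσ : ∀ i, 0 < σ i) (hp : ∀ i, 0 < p i)
    (j : Fin K) (d : Fin K → ℝ) :
    HasDerivAt (fun t : ℝ => chernoffInfo θ σ I j (p + t • d))
      (chernoffGrad θ σ I p j ⬝ᵥ d) 0 := by
  rw [chernoffGrad_dotProduct]
  exact hasDerivAt_pairChernoff_add_mul (chernoffInfo_denom_pos hσ hp j).ne' (d I) (d j)

theorem chernoffInfo_le_chernoffGrad_dotProduct (hσ : ∀ i, 0 < σ i) (hp : ∀ i, 0 < p i)
    (j : Fin K) {q : Fin K → ℝ} (hq : ∀ i, 0 ≤ q i) :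
    chernoffInfo θ σ I j q ≤ chernoffGrad θ σ I p j ⬝ᵥ q := by
  rw [chernoffGrad_dotProduct]
  exact pairChernoff_le (sq_nonneg _) (pow_pos (hσ I) 2) (pow_pos (hσ j) 2) (hp I) (hp j)
    (hq I) (hq j)

theorem chernoffInfo_pos (hσ : ∀ i, 0 < σ i) (hp : ∀ i, 0 < p i) {j : Fin K}
    (hj : θ j < θ I) : 0 < chernoffInfo θ σ I j p := by
  have := chernoffInfo_denom_pos (I := I) hσ hp j
  have := sub_pos.2 hj; have := hp I; have := hp j
  unfold chernoffInfo pairChernoff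
  positivity

theorem chernoffSelection_mul_chernoffInfo (hσ : ∀ i, 0 < σ i) (hp : ∀ i, 0 < p i) {j : Fin K}
    (hj : j ≠ I) (i : Fin K) :
    chernoffSelection σ I p j i * chernoffInfo θ σ I j p = p i * chernoffGrad θ σ I p j i := by
  have ha := pow_pos (hσ I) 2
  have hb := pow_pos (hσ j) 2
  by_cases hiI : i = I
  · subst hiI
    simp [chernoffSelection, chernoffGrad, chernoffInfo, hj,
      pairChernoff_selection_fst ha hb (hp i) (hp j)]
  · by_cases hij : i = j
    · subst hij
      simp [chernoffSelection, chernoffGrad, chernoffInfo, hj,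
        pairChernoff_selection_snd ha hb (hp I) (hp i)]
    · simp [chernoffSelection, chernoffGrad, hiI, hij]

theorem isMaxOn_iInf_chernoffInfo_iff [Nonempty {j // j ≠ I}]
    (hbest : ∀ j, j ≠ I → θ j < θ I) (hσ : ∀ i, 0 < σ i) (hp : ∀ i, 0 < p i)
    (hsum : ∑ i, p i = 1) :
    IsMaxOn (fun q => ⨅ j : {j // j ≠ I}, chernoffInfo θ σ I j q) (stdSimplex ℝ (Fin K)) p ↔
      ∃ w ∈ stdSimplex ℝ {j // j ≠ I},
        (∀ j, w j * ((⨅ k : {k // k ≠ I}, chernoffInfo θ σ I k p) - chernoffInfo θ σ I j p) = 0) ∧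
        ∀ i, p i = ∑ j, w j * chernoffSelection σ I p j i := by
  have hΓ : 0 < ⨅ j : {j // j ≠ I}, chernoffInfo θ σ I j p := by
    obtain ⟨j, hj⟩ :=
      exists_eq_ciInf_of_finite (f := fun j : {j // j ≠ I} => chernoffInfo θ σ I j p)
    exact (chernoffInfo_pos hσ hp (hbest j j.2)).trans_eq hj
  rw [isMaxOn_iInf_iff_exists_sum_smul_eq_const (F := fun j : {j // j ≠ I} => chernoffInfo θ σ I j)
    (g := fun j => chernoffGrad θ σ I p j) hp hsum
    (fun j => hasDerivAt_chernoffInfo_add_smul hσ hp j)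
    (fun j _ hq => chernoffInfo_le_chernoffGrad_dotProduct hσ hp j hq.1)
    (fun j => chernoffGrad_dotProduct_self hσ hp j)]
  exact exists_congr fun w => and_congr_right fun _ => and_congr_right fun hslack =>
    sum_smul_eq_const_iff_forall_eq_sum_mul
      (fun j i => chernoffSelection_mul_chernoffInfo hσ hp j.2 i) hslack hΓ.ne' fun i => (hp i).ne'

end Gaussian

/-- KKT characterization of the optimal allocation for Gaussian BAI:
a component-wise strictly positive `p` in the simplex maximizes
`min_{j ≠ I*} C_j(·)` over the simplex iff there exist nonnegative dual variables
`μ` summing to one over `j ≠ I*` satisfying the stationarity condition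
`p_i = Σ_{j ≠ I*} μ_j h^j_i(p)` and the complementary slackness condition
`μ_j (min_{j'} C_{j'}(p) − C_j(p)) = 0`. -/
theorem stmt15 (K : ℕ) (hK : 2 ≤ K) (θ σ : Fin K → ℝ) (Istar : Fin K)
    (hbest : ∀ j, j ≠ Istar → θ j < θ Istar) (hσ : ∀ i, 0 < σ i)
    (p : Fin K → ℝ) (hp : ∀ i, 0 < p i) (hsum : ∑ i, p i = 1) :
    let C : Fin K → (Fin K → ℝ) → ℝ := fun j q =>
      (θ Istar - θ j) ^ 2 * q Istar * q j / (2 * (σ Istar ^ 2 * q j + σ j ^ 2 * q Istar))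
    let S : Set (Fin K → ℝ) := {q | (∀ i, 0 ≤ q i) ∧ ∑ i, q i = 1}
    let Γ : (Fin K → ℝ) → ℝ := fun q => ⨅ j : {j : Fin K // j ≠ Istar}, C j q
    let h : Fin K → Fin K → ℝ := fun j i =>
      if i = Istar then (σ Istar ^ 2 / p Istar) / (σ Istar ^ 2 / p Istar + σ j ^ 2 / p j)
      else if i = j then (σ j ^ 2 / p j) / (σ Istar ^ 2 / p Istar + σ j ^ 2 / p j)
      else 0
    (IsMaxOn Γ S p ↔
      ∃ μ : Fin K → ℝ, (∀ j, j ≠ Istar → 0 ≤ μ j) ∧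
        (∑ j ∈ Finset.univ.filter (· ≠ Istar), μ j = 1) ∧
        (∀ i : Fin K, p i = ∑ j ∈ Finset.univ.filter (· ≠ Istar), μ j * h j i) ∧
        (∀ j, j ≠ Istar → μ j * (Γ p - C j p) = 0)) := by
  intro C S Γ h
  have : Nonempty {j : Fin K // j ≠ Istar} := by
    obtain ⟨j, hj⟩ := Fintype.exists_ne_of_one_lt_card (by rw [Fintype.card_fin]; omega) Istar
    exact ⟨⟨j, hj⟩⟩
  have hsub (f : Fin K → ℝ) : ∑ j ∈ univ.filter (· ≠ Istar), f j = ∑ j : {j // j ≠ Istar}, f j :=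
    sum_subtype _ (by simp) f
  simp only [hsub]
  rw [show IsMaxOn Γ S p ↔ _ from isMaxOn_iInf_chernoffInfo_iff hbest hσ hp hsum]
  constructor
  · rintro ⟨w, hw, hslack, hstat⟩
    obtain ⟨μ, rfl⟩ : ∃ μ : Fin K → ℝ, μ ∘ Subtype.val = w :=
      ⟨_, Function.extend_comp Subtype.val_injective w 0⟩
    exact ⟨μ, fun j hj => hw.1 ⟨j, hj⟩, hw.2, hstat, fun j hj => hslack ⟨j, hj⟩⟩
  · rintro ⟨μ, hμ0, hμ1, hstat, hslack⟩
    exact ⟨fun j => μ j, ⟨fun j => hμ0 j j.2, hμ1⟩, fun j => hslack j j.2, hstat⟩
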